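/- Let G be a finite group, p a prime, and let A be a subgroup of maximum order among the self-centralizing subgroups of G. Suppose |G : A| = p^2, |G : Z(G)| = p^i with i > 4, and G possesses no subgroup T with |G : T| = p and |G : Z(T)| = p^3. Then CD(G) = {A}. -/

import Mathlib

/-- The Chermak-Delgado measure of a subgroup `H` of `G`: `|H| · |C_G(H)|`. -/
noncomputable def cdMeasure (G : Type*) [Group G] (H : Subgroup G) : ℕ :=
  Nat.card H * Nat.card (Subgroup.centralizer (H : Set G))

/-- The Chermak-Delgado lattice of `G`: the set of subgroups whose
Chermak-Delgado measure is maximal. -/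
def CD (G : Type*) [Group G] : Set (Subgroup G) :=
  {H : Subgroup G | ∀ K : Subgroup G, cdMeasure G K ≤ cdMeasure G H}

/-- The center of a subgroup `T` of `G`, regarded as a subgroup of `G`. -/
def centerIn {G : Type*} [Group G] (T : Subgroup G) : Subgroup G :=
  (Subgroup.center T).map T.subtype

/-
The measure `m_G(H) = |H| |C_G(H)|` is maximal exactly where the index product
`|G : H| |G : C_G(H)|` is minimal. By the Chermak–Delgado inequality `CD(G)` is closed under
joins and centralizers, so for `K ∈ CD(G)` the join `M = K C_G(K)` lies in `CD(G)` and satisfies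
`C_G(M) = Z(M) ≤ M`. Comparing with `A`, whose index product is `p⁴`, gives
`|G : M| |G : Z(M)| ≤ p⁴`; since `Z(G) ≤ Z(M)` and `i > 4`, the only possibilities besides
`Z(M) = M` are `|G : M| = p` with `|M : Z(M)| ∈ {p, p²}`: the first makes `M` abelian and the
second is excluded by hypothesis. Hence `K = C_G(K)`, so `m_G(K) ≤ m_G(A)` and `A ∈ CD(G)`;
the same argument applied to `K A` then forces `K = A`.
-/

open Subgroup

namespace Subgroup

variable {G : Type*} [Group G]

theorem centralizer_sup (H K : Subgroup G) :
    centralizer ((H ⊔ K : Subgroup G) : Set G) =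
      centralizer (H : Set G) ⊓ centralizer (K : Set G) := by
  refine le_antisymm (le_inf (centralizer_le (SetLike.coe_subset_coe.mpr le_sup_left))
    (centralizer_le (SetLike.coe_subset_coe.mpr le_sup_right))) ?_
  rw [← le_centralizer_iff]
  exact sup_le (le_centralizer_iff.mp inf_le_left) (le_centralizer_iff.mp inf_le_right)

theorem le_centralizer_centralizer (H : Subgroup G) :
    H ≤ centralizer ((centralizer (H : Set G) : Subgroup G) : Set G) :=
  Set.subset_centralizer_centralizer

theorem eq_of_le_of_index_le {H K : Subgroup G} [H.FiniteIndex] (hle : H ≤ K)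
    (hidx : H.index ≤ K.index) : H = K :=
  hle.eq_of_not_lt fun hlt => (index_strictAnti hlt).not_ge hidx

theorem index_inf_mul_index_sup_le (H K : Subgroup G) :
    (H ⊓ K).index * (H ⊔ K).index ≤ H.index * K.index := by
  calc (H ⊓ K).index * (H ⊔ K).index
      = (H ⊓ K).relIndex (H ⊔ K) * (H ⊔ K).index * (H ⊔ K).index := by
        rw [relIndex_mul_index (inf_le_left.trans le_sup_left)]
    _ ≤ H.relIndex (H ⊔ K) * K.relIndex (H ⊔ K) * (H ⊔ K).index * (H ⊔ K).index := by
        gcongr; exact relIndex_inf_le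
    _ = H.index * K.index := by
        rw [← relIndex_mul_index (le_sup_left : H ≤ H ⊔ K),
          ← relIndex_mul_index (le_sup_right : K ≤ H ⊔ K)]
        ring

theorem centerIn_eq_inf_centralizer (T : Subgroup G) :
    centerIn T = T ⊓ centralizer (T : Set G) := by
  ext x
  simp only [centerIn, mem_map, mem_inf, mem_centralizer_iff]
  constructor
  · rintro ⟨y, hy, rfl⟩
    exact ⟨y.2, fun h hh => congrArg Subtype.val (mem_center_iff.mp hy ⟨h, hh⟩)⟩
  · rintro ⟨hxT, hx⟩
    exact ⟨⟨x, hxT⟩, mem_center_iff.mpr fun z => Subtype.ext (hx z z.2), rfl⟩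

theorem index_center_mul_index (T : Subgroup G) :
    (center T).index * T.index = (centerIn T).index := by
  have hsub : (centerIn T).subgroupOf T = center T :=
    comap_map_eq_self_of_injective T.subtype_injective _
  have h := relIndex_mul_index ((centerIn_eq_inf_centralizer T).trans_le inf_le_left)
  rwa [relIndex, hsub] at h

theorem le_centralizer_of_index_center_prime {T : Subgroup G} {p : ℕ} (hp : p.Prime)
    (h : (center T).index = p) : T ≤ centralizer (T : Set G) := by
  have : Fact p.Prime := ⟨hp⟩
  have : IsCyclic (T ⧸ center T) := isCyclic_of_prime_card (h ▸ (index_eq_card _).symm)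
  exact le_centralizer_iff_isMulCommutative.mpr
    (isMulCommutative_of_isCyclic_quotient_center_self T)

end Subgroup

section ChermakDelgado

variable {G : Type*} [Group G]

noncomputable def cdIndex (H : Subgroup G) : ℕ :=
  H.index * (centralizer (H : Set G)).index

theorem cdMeasure_mul_cdIndex (H : Subgroup G) :
    cdMeasure G H * cdIndex H = Nat.card G * Nat.card G := by
  rw [cdMeasure, cdIndex, mul_mul_mul_comm, card_mul_index, card_mul_index]

variable [Finite G]

theorem cdIndex_pos (H : Subgroup G) : 0 < cdIndex H :=
  Nat.mul_pos (Nat.pos_of_ne_zero index_ne_zero_of_finite)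
    (Nat.pos_of_ne_zero index_ne_zero_of_finite)

theorem mem_CD_iff_cdIndex_le {H : Subgroup G} :
    H ∈ CD G ↔ ∀ K : Subgroup G, cdIndex H ≤ cdIndex K := by
  have key (K : Subgroup G) : cdMeasure G K ≤ cdMeasure G H ↔ cdIndex H ≤ cdIndex K := by
    have hK := cdMeasure_mul_cdIndex K
    have hH := cdMeasure_mul_cdIndex H
    have hmH : 0 < cdMeasure G H := Nat.mul_pos Nat.card_pos Nat.card_pos
    have hmK : 0 < cdMeasure G K := Nat.mul_pos Nat.card_pos Nat.card_pos
    have hcH := cdIndex_pos H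
    have hcK := cdIndex_pos K
    constructor <;> intro h <;> by_contra! h' <;> nlinarith
  exact forall_congr' key

theorem cdIndex_inf_mul_cdIndex_sup_le (H K : Subgroup G) :
    cdIndex (H ⊓ K) * cdIndex (H ⊔ K) ≤ cdIndex H * cdIndex K := by
  set CH := centralizer (H : Set G)
  set CK := centralizer (K : Set G)
  have hinf : CH ⊔ CK ≤ centralizer ((H ⊓ K : Subgroup G) : Set G) :=
    sup_le (centralizer_le (SetLike.coe_subset_coe.mpr inf_le_left))
      (centralizer_le (SetLike.coe_subset_coe.mpr inf_le_right))
  have hcent : (centralizer ((H ⊓ K : Subgroup G) : Set G)).index *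
      (centralizer ((H ⊔ K : Subgroup G) : Set G)).index ≤ CH.index * CK.index :=
    calc (centralizer ((H ⊓ K : Subgroup G) : Set G)).index *
          (centralizer ((H ⊔ K : Subgroup G) : Set G)).index
        ≤ (CH ⊔ CK).index * (CH ⊓ CK).index := by
          rw [centralizer_sup]; gcongr
      _ ≤ CH.index * CK.index := by
          rw [mul_comm]; exact index_inf_mul_index_sup_le CH CK
  have h := Nat.mul_le_mul (index_inf_mul_index_sup_le H K) hcent
  simp only [cdIndex] at h ⊢
  linarith

theorem sup_mem_CD {H K : Subgroup G} (hH : H ∈ CD G) (hK : K ∈ CD G) : H ⊔ K ∈ CD G := by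
  rw [mem_CD_iff_cdIndex_le] at hH hK ⊢
  have hKH : cdIndex K = cdIndex H := le_antisymm (hK H) (hH K)
  have hsup : cdIndex (H ⊔ K) ≤ cdIndex H := by
    have := cdIndex_inf_mul_cdIndex_sup_le H K
    rw [hKH] at this
    nlinarith [hH (H ⊓ K), cdIndex_pos H]
  exact fun L => hsup.trans (hH L)

theorem centralizer_mem_CD {H : Subgroup G} (hH : H ∈ CD G) :
    centralizer (H : Set G) ∈ CD G := by
  rw [mem_CD_iff_cdIndex_le] at hH ⊢
  refine fun L => le_trans ?_ (hH L)
  rw [cdIndex, cdIndex, mul_comm]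
  gcongr
  exact le_centralizer_centralizer H

theorem centralizer_centralizer_of_mem_CD {H : Subgroup G} (hH : H ∈ CD G) :
    centralizer ((centralizer (H : Set G) : Subgroup G) : Set G) = H := by
  have h := mem_CD_iff_cdIndex_le.mp hH (centralizer (H : Set G))
  rw [cdIndex, cdIndex, mul_comm] at h
  exact (eq_of_le_of_index_le (le_centralizer_centralizer H)
    (Nat.le_of_mul_le_mul_left h (Nat.pos_of_ne_zero index_ne_zero_of_finite))).symm

end ChermakDelgado

theorem centralizer_eq_self_of_mem_CD {G : Type*} [Group G] [Finite G] {p i : ℕ} (hp : p.Prime)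
    {A : Subgroup G} (hA : centralizer (A : Set G) = A) (hiA : A.index = p ^ 2) (hi : 4 < i)
    (hZ : (center G).index = p ^ i)
    (hnoT : ¬ ∃ T : Subgroup G, T.index = p ∧ (centerIn T).index = p ^ 3)
    {T : Subgroup G} (hT : T ∈ CD G) (hCT : centralizer (T : Set G) ≤ T) :
    centralizer (T : Set G) = T := by
  have hZC : (centralizer (T : Set G)).index ∣ p ^ i :=
    hZ ▸ index_dvd_of_le (center_le_centralizer _)
  obtain ⟨b, -, hb⟩ := (Nat.dvd_prime_pow hp).mp hZC
  obtain ⟨a, -, ha⟩ := (Nat.dvd_prime_pow hp).mp ((index_dvd_of_le hCT).trans hZC)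
  have hab : a ≤ b :=
    (Nat.pow_dvd_pow_iff_le_right hp.one_lt).mp (ha ▸ hb ▸ index_dvd_of_le hCT)
  have hsum : a + b ≤ 4 := by
    have h := mem_CD_iff_cdIndex_le.mp hT A
    rw [cdIndex, cdIndex, hA, hiA, ha, hb, ← pow_add, ← pow_add] at h
    exact (Nat.pow_le_pow_iff_right hp.one_lt).mp h
  have hcenter : centerIn T = centralizer (T : Set G) := by
    rw [centerIn_eq_inf_centralizer, inf_eq_right.mpr hCT]
  rcases hab.eq_or_lt with rfl | hlt
  · exact eq_of_le_of_index_le hCT (ha ▸ hb ▸ le_rfl)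
  exfalso
  obtain rfl | rfl : a = 0 ∨ a = 1 := by omega
  · rw [index_eq_one.mp (ha.trans (pow_zero p)), coe_top, centralizer_univ, hZ] at hb
    have := Nat.pow_right_injective hp.two_le hb
    omega
  obtain rfl | rfl : b = 2 ∨ b = 3 := by omega
  · have hZT : (center T).index = p := by
      have h := index_center_mul_index T
      rw [hcenter, ha, hb, pow_one, sq] at h
      exact Nat.eq_of_mul_eq_mul_right hp.pos h
    have hTC := le_antisymm hCT (le_centralizer_of_index_center_prime hp hZT)
    rw [hTC, ha] at hb
    have := Nat.pow_right_injective hp.two_le hb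
    omega
  · exact hnoT ⟨T, ha.trans (pow_one p), hcenter ▸ hb⟩

theorem stmt_7 (G : Type*) [Group G] [Finite G] (p : ℕ) (hp : p.Prime)
    (A : Subgroup G) (hA : Subgroup.centralizer (A : Set G) = A)
    (hAmax : ∀ B : Subgroup G, Subgroup.centralizer (B : Set G) = B →
      Nat.card B ≤ Nat.card A)
    (hiA : A.index = p ^ 2) (i : ℕ) (hi : 4 < i)
    (hZ : (Subgroup.center G).index = p ^ i)
    (hnoT : ¬ ∃ T : Subgroup G, T.index = p ∧ (centerIn T).index = p ^ 3) :
    CD G = {A} := by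
  have eq_of_centralizer_sup {H K : Subgroup G} (hH : H ∈ CD G) (hK : K ∈ CD G)
      (hC : centralizer ((H ⊔ K : Subgroup G) : Set G) = H ⊓ K) : H = K :=
    inf_eq_sup.mp <| hC.symm.trans <| centralizer_eq_self_of_mem_CD hp hA hiA hi hZ hnoT
      (sup_mem_CD hH hK) (hC ▸ inf_le_sup)
  have eq_A {K : Subgroup G} (hK : K ∈ CD G) : K = A := by
    have hKself : centralizer (K : Set G) = K := by
      refine (eq_of_centralizer_sup hK (centralizer_mem_CD hK) ?_).symm
      rw [centralizer_sup, centralizer_centralizer_of_mem_CD hK, inf_comm]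
    have hA_mem : A ∈ CD G := fun L => (hK L).trans <| by
      rw [cdMeasure, cdMeasure, hKself, hA]
      exact Nat.mul_self_le_mul_self (hAmax K hKself)
    exact eq_of_centralizer_sup hK hA_mem (by rw [centralizer_sup, hKself, hA])
  obtain ⟨K, hK⟩ := Finite.exists_max (cdMeasure G)
  ext L
  exact ⟨eq_A, fun hL => hL ▸ eq_A hK ▸ hK⟩
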